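/- Let P be an n×n real row-stochastic matrix, P* the Cesàro limit of P^m, and H = (I − P + P*)⁻¹ (I − P*) the Drazin inverse of I − P. Then H satisfies: H (I − P) = (I − P) H = I − P*, and H P* = P* H = 0. -/

import Mathlib

/-!
With `Aₘ = m⁻¹ ∑_{k<m} Pᵏ` one has `P Aₘ - Aₘ = m⁻¹ (Pᵐ - 1)`, and the powers of a stochastic
matrix are bounded, so the Cesàro limit satisfies `P P* = P* P = P*`; then `Aₘ P* = P*`, so `P*`
is idempotent. If `(1 - P + P*) X = 0`, multiplying by `P*` gives `P* X = 0`, hence `P X = X`,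
hence `X = P* X = 0`: in the finite-dimensional matrix algebra `Q = 1 - P + P*` is therefore
invertible. The identities follow from `Q (1 - P*) = 1 - P` and the fact that `Q` commutes with `P`.
-/

open Finset Filter Topology

def RowStochastic {n : ℕ} (P : Matrix (Fin n) (Fin n) ℝ) : Prop :=
  (∀ i j, 0 ≤ P i j) ∧ ∀ i, ∑ j, P i j = 1

open Matrix

section Cesaro

variable {A : Type*} [Ring A] [Algebra ℝ A]

noncomputable def cesaroMean (P : A) (m : ℕ) : A := (m : ℝ)⁻¹ • ∑ k ∈ range m, P ^ k

lemma commute_cesaroMean (P : A) (m : ℕ) : Commute P (cesaroMean P m) :=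
  (Commute.sum_right _ _ _ fun k _ => (Commute.refl P).pow_right k).smul_right _

lemma mul_cesaroMean_sub (P : A) (m : ℕ) :
    P * cesaroMean P m - cesaroMean P m = (m : ℝ)⁻¹ • (P ^ m - 1) := by
  rw [← sub_one_mul, cesaroMean, mul_smul_comm, mul_geom_sum]

lemma cesaroMean_mul_of_mul_eq_self {P X : A} (h : P * X = X) {m : ℕ} (hm : m ≠ 0) :
    cesaroMean P m * X = X := by
  have hpow : ∀ k : ℕ, P ^ k * X = X := fun k => by
    induction k with
    | zero => rw [pow_zero, one_mul]
    | succ k ih => rw [pow_succ, mul_assoc, h, ih]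
  rw [cesaroMean, smul_mul_assoc, sum_mul, sum_congr rfl fun k _ => hpow k, sum_const,
    card_range, ← Nat.cast_smul_eq_nsmul ℝ, smul_smul, inv_mul_cancel₀ (Nat.cast_ne_zero.2 hm),
    one_smul]

variable [TopologicalSpace A] [IsTopologicalRing A] [T2Space A] {P Pstar : A}

lemma cesaroLimit_mul_of_mul_eq_self (hPstar : Tendsto (cesaroMean P) atTop (𝓝 Pstar))
    {X : A} (h : P * X = X) : Pstar * X = X :=
  tendsto_nhds_unique (hPstar.mul_const X) <| tendsto_const_nhds.congr' <|
    (eventually_ne_atTop 0).mono fun _ hm => (cesaroMean_mul_of_mul_eq_self h hm).symm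

variable [ContinuousSMul ℝ A]

lemma mul_cesaroLimit (hPstar : Tendsto (cesaroMean P) atTop (𝓝 Pstar))
    (hdecay : Tendsto (fun m : ℕ => (m : ℝ)⁻¹ • P ^ m) atTop (𝓝 0)) :
    P * Pstar = Pstar := by
  have hinv : Tendsto (fun m : ℕ => (m : ℝ)⁻¹ • (1 : A)) atTop (𝓝 0) := by
    simpa using (tendsto_inv_atTop_zero.comp (tendsto_natCast_atTop_atTop (R := ℝ))).smul_const
      (1 : A)
  have hrem : Tendsto (fun m : ℕ => (m : ℝ)⁻¹ • (P ^ m - 1)) atTop (𝓝 0) := by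
    simpa only [smul_sub, sub_zero] using hdecay.sub hinv
  have hdiff := (hPstar.const_mul P).sub hPstar
  simp only [mul_cesaroMean_sub] at hdiff
  exact sub_eq_zero.1 (tendsto_nhds_unique hdiff hrem)

lemma cesaroLimit_mul (hPstar : Tendsto (cesaroMean P) atTop (𝓝 Pstar))
    (hdecay : Tendsto (fun m : ℕ => (m : ℝ)⁻¹ • P ^ m) atTop (𝓝 0)) :
    Pstar * P = Pstar := by
  have h := hPstar.mul_const P
  simp only [← (commute_cesaroMean P _).eq] at h
  rw [tendsto_nhds_unique h (hPstar.const_mul P), mul_cesaroLimit hPstar hdecay]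

lemma isIdempotentElem_cesaroLimit (hPstar : Tendsto (cesaroMean P) atTop (𝓝 Pstar))
    (hdecay : Tendsto (fun m : ℕ => (m : ℝ)⁻¹ • P ^ m) atTop (𝓝 0)) :
    IsIdempotentElem Pstar :=
  cesaroLimit_mul_of_mul_eq_self hPstar (mul_cesaroLimit hPstar hdecay)

lemma isLeftRegular_one_sub_add_cesaroLimit (hPstar : Tendsto (cesaroMean P) atTop (𝓝 Pstar))
    (hdecay : Tendsto (fun m : ℕ => (m : ℝ)⁻¹ • P ^ m) atTop (𝓝 0)) :
    IsLeftRegular (1 - P + Pstar) := by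
  refine isLeftRegular_iff_right_eq_zero_of_mul.2 fun X hX => ?_
  have hPstarQ : Pstar * (1 - P + Pstar) = Pstar := by
    rw [mul_add, mul_sub, mul_one, cesaroLimit_mul hPstar hdecay,
      (isIdempotentElem_cesaroLimit hPstar hdecay).eq, sub_self, zero_add]
  have hPstarX : Pstar * X = 0 := by rw [← hPstarQ, mul_assoc, hX, mul_zero]
  have hPX : P * X = X := by
    rw [add_mul, hPstarX, add_zero, sub_mul, one_mul, sub_eq_zero] at hX
    exact hX.symm
  rw [← cesaroLimit_mul_of_mul_eq_self hPstar hPX, hPstarX]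

end Cesaro

theorem drazin_identities {R : Type*} [Ring R] {P S : R} (hPS : P * S = S) (hSP : S * P = S)
    (hS : IsIdempotentElem S) (hQ : IsUnit (1 - P + S)) :
    Ring.inverse (1 - P + S) * (1 - S) * (1 - P) = 1 - S ∧
      (1 - P) * (Ring.inverse (1 - P + S) * (1 - S)) = 1 - S ∧
      Ring.inverse (1 - P + S) * (1 - S) * S = 0 ∧
      S * (Ring.inverse (1 - P + S) * (1 - S)) = 0 := by
  obtain ⟨Q, hQ⟩ := hQ
  have hcomm : Commute (1 - P) Q := by
    rw [hQ]
    exact (Commute.refl _).add_right ((Commute.one_left S).sub_left (hPS.trans hSP.symm))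
  have hPS' : (1 - P) * (1 - S) = 1 - P := by rw [mul_sub, mul_one, sub_mul, one_mul, hPS]; abel
  have hSP' : (1 - S) * (1 - P) = 1 - P := by rw [mul_sub, mul_one, sub_mul, one_mul, hSP]; abel
  have hQS : ↑Q * (1 - S) = 1 - P := by rw [hQ, add_mul, hPS', hS.mul_one_sub_self, add_zero]
  have hSQ : S * ↑Q = S := by
    rw [hQ, mul_add, mul_sub, mul_one, hSP, hS.eq, sub_self, zero_add]
  have hinv : ↑Q⁻¹ * (1 - P) = 1 - S := by rw [← hQS, Units.inv_mul_cancel_left]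
  have hSinv : S * ↑Q⁻¹ = S := (Units.mul_inv_eq_iff_eq_mul Q).2 hSQ.symm
  rw [← hQ, Ring.inverse_unit]
  refine ⟨?_, ?_, ?_, ?_⟩
  · rw [mul_assoc, hSP', hinv]
  · rw [← mul_assoc, hcomm.units_inv_right.eq, mul_assoc, hPS', hinv]
  · rw [mul_assoc, hS.one_sub_mul_self, mul_zero]
  · rw [← mul_assoc, hSinv, hS.mul_one_sub_self]

lemma tendsto_inv_smul_pow_of_mem_rowStochastic {n : ℕ} {P : Matrix (Fin n) (Fin n) ℝ}
    (hP : P ∈ rowStochastic ℝ (Fin n)) :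
    Tendsto (fun m : ℕ => (m : ℝ)⁻¹ • P ^ m) atTop (𝓝 0) := by
  let _ := Matrix.normedAddCommGroup (m := Fin n) (n := Fin n) (α := ℝ)
  let _ := Matrix.normedSpace (m := Fin n) (n := Fin n) (α := ℝ) (R := ℝ)
  refine (tendsto_inv_atTop_zero.comp tendsto_natCast_atTop_atTop).zero_smul_isBoundedUnder_le
    (isBoundedUnder_of ⟨1, fun m => (norm_le_iff zero_le_one).2 fun i j => ?_⟩)
  have hPm := pow_mem hP m
  rw [Real.norm_of_nonneg (nonneg_of_mem_rowStochastic hPm)]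
  exact le_one_of_mem_rowStochastic hPm

/-- properties of the Drazin inverse `H = (I - P + Pstar)⁻¹ (I - Pstar)`
of `I - P`: `H (I - P) = (I - P) H = I - Pstar` and `H Pstar = Pstar H = 0`. -/
theorem drazin_inverse_properties {n : ℕ} (P : Matrix (Fin n) (Fin n) ℝ)
    (hP : RowStochastic P) (Pstar : Matrix (Fin n) (Fin n) ℝ)
    (hPstar : Tendsto (fun m : ℕ => (m : ℝ)⁻¹ • ∑ k ∈ Finset.range m, P ^ k)
      atTop (𝓝 Pstar))
    (H : Matrix (Fin n) (Fin n) ℝ)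
    (hH : H = (1 - P + Pstar)⁻¹ * (1 - Pstar)) :
    H * (1 - P) = 1 - Pstar ∧ (1 - P) * H = 1 - Pstar ∧
      H * Pstar = 0 ∧ Pstar * H = 0 := by
  have hdecay := tendsto_inv_smul_pow_of_mem_rowStochastic (mem_rowStochastic_iff_sum.2 hP)
  have hQ : IsUnit (1 - P + Pstar) := IsArtinianRing.isUnit_iff_isLeftRegular.2
    (isLeftRegular_one_sub_add_cesaroLimit hPstar hdecay)
  rw [hH, nonsing_inv_eq_ringInverse]
  exact drazin_identities (mul_cesaroLimit hPstar hdecay) (cesaroLimit_mul hPstar hdecay)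
    (isIdempotentElem_cesaroLimit hPstar hdecay) hQ
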